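/- Let R:(0,∞)→ℂ be smooth with compact support in [1,2], X ≥ 1, 1 ≤ u < X^{1/2}, ℓ ∈ ℤ, and β ∈ {1, 1+λ³} (mod 4). Then Σ_{0,β}(X,ℓ,u) = H_β(X,ℓ), where H_β(X,ℓ) := Σ_{c ∈ ℤ[i], c ≡ β (mod 4)} g̃₄(c)·(c̄/|c|)^ℓ·Λ(c)·R(N(c)/X). -/

import Mathlib

open scoped ComplexConjugate Classical
open UniqueFactorizationMonoid

noncomputable section

abbrev ZI := GaussianInt

namespace QuarticGauss

/-- `λ = 1 + i`, the ramified prime of `ℤ[i]`. -/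
def lam : ZI := ⟨1, 1⟩

/-- `ě(z) = e(z + z̄)`. -/
def eCheck (z : ℂ) : ℂ := Complex.exp (2 * Real.pi * Complex.I * (z + conj z))

/-- The quartic residue character at a prime `p` of `ℤ[i]`: the unique fourth root of
unity congruent to `a ^ ((N p - 1)/4)` modulo `p` (and `0` if there is none). -/
def quarticCharPrime (a p : ZI) : ZI :=
  if h : ∃ u : ZI, (u = 1 ∨ u = ⟨0, 1⟩ ∨ u = -1 ∨ u = ⟨0, -1⟩) ∧
      p ∣ a ^ ((p.norm.natAbs - 1) / 4) - u then h.choose else 0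

/-- The quartic residue symbol `(a/c)₄`, extended multiplicatively in the denominator
over a prime factorisation of `c`; it vanishes if `gcd (a, c) ≠ 1`. -/
def quarticSymbol (a c : ZI) : ZI :=
  ((factors c).map fun p => quarticCharPrime a p).prod

/-- The quadratic residue symbol `(a/c)₂ = (a/c)₄²`. -/
def quadraticSymbol (a c : ZI) : ZI := quarticSymbol a c ^ 2

/-- The quartic Gauss sum `g₄(ν, c) = Σ_{d mod c} (d/c)₄ ě(νd/c)`. -/
def g4 (ν c : ZI) : ℂ :=
  ∑ᶠ d : ZI ⧸ Ideal.span {c},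
    GaussianInt.toComplex (quarticSymbol d.out c) *
      eCheck (GaussianInt.toComplex (ν * d.out) / GaussianInt.toComplex c)

/-- The quadratic Gauss sum `g₂(ν, c) = Σ_{d mod c} (d/c)₂ ě(νd/c)`. -/
def g2 (ν c : ZI) : ℂ :=
  ∑ᶠ d : ZI ⧸ Ideal.span {c},
    GaussianInt.toComplex (quadraticSymbol d.out c) *
      eCheck (GaussianInt.toComplex (ν * d.out) / GaussianInt.toComplex c)

/-- The normalised quartic Gauss sum `g̃₄(ν, c) = N(c)^{-1/2} g₄(ν, c)`. -/
def g4t (ν c : ZI) : ℂ := g4 ν c / (Real.sqrt (c.norm : ℝ) : ℂ)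

/-- The unitary Grössencharacter `c ↦ c̄ / |c|` (as a complex number). -/
def gch (c : ZI) : ℂ :=
  conj (GaussianInt.toComplex c) / ((‖GaussianInt.toComplex c‖ : ℝ) : ℂ)

/-- The von Mangoldt function on `ℤ[i]`. -/
def vMangoldt (c : ZI) : ℝ :=
  if h : ∃ p : ZI, Prime p ∧ ∃ k : ℕ, 1 ≤ k ∧ Associated c (p ^ k) then
    Real.log ((h.choose.norm.natAbs : ℝ))
  else 0

/-- The Möbius function on `ℤ[i]`. -/
def mu (c : ZI) : ℤ :=
  if Squarefree c then (-1) ^ Multiset.card (factors c) else 0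

/-- `C(a, b) = ((N a - 1)/4) ((N b - 1)/4)`. -/
def Cf (a b : ZI) : ℤ := ((a.norm - 1) / 4) * ((b.norm - 1) / 4)

/-- `φ(c)`: the number of invertible residue classes modulo `c`. -/
def totient (c : ZI) : ℕ := Nat.card ((ZI ⧸ Ideal.span {c})ˣ)

end QuarticGauss

namespace QuarticGauss

/-- The generic trilinear sum `Σ_{a,b,c ≡ 1 (λ³), abc ≡ β (4), Q(a,b,c)}
`Λ(a) μ(b) g̃₄(abc) (conj(abc)/|abc|)^ℓ R(N(abc)/X)`. -/
def SigmaGen (R : ℝ → ℂ) (X : ℝ) (l : ℤ) (β : ZI) (Q : ZI → ZI → ZI → Prop) : ℂ :=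
  ∑ᶠ t ∈ {t : ZI × ZI × ZI |
      lam ^ 3 ∣ (t.1 - 1) ∧ lam ^ 3 ∣ (t.2.1 - 1) ∧ lam ^ 3 ∣ (t.2.2 - 1) ∧
      (4 : ZI) ∣ (t.1 * t.2.1 * t.2.2 - β) ∧ Q t.1 t.2.1 t.2.2},
    (vMangoldt t.1 : ℂ) * (mu t.2.1 : ℂ) * g4t 1 (t.1 * t.2.1 * t.2.2) *
      gch (t.1 * t.2.1 * t.2.2) ^ l * R (((t.1 * t.2.1 * t.2.2).norm : ℝ) / X)

/-- `Σ_{0,β}(X,ℓ,u)`: restriction `N(bc) ≤ u`. -/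
def Sigma0 (R : ℝ → ℂ) (X : ℝ) (l : ℤ) (β : ZI) (u : ℝ) : ℂ :=
  SigmaGen R X l β fun _ b c => ((b * c).norm : ℝ) ≤ u

/-- `Σ_{1,β}(X,ℓ,u)`: restriction `N(b) ≤ u`. -/
def Sigma1 (R : ℝ → ℂ) (X : ℝ) (l : ℤ) (β : ZI) (u : ℝ) : ℂ :=
  SigmaGen R X l β fun _ b _ => ((b.norm : ℝ)) ≤ u

/-- `Σ_{2′,β}(X,ℓ,u)`: restriction `N(ab) ≤ u`. -/
def Sigma2' (R : ℝ → ℂ) (X : ℝ) (l : ℤ) (β : ZI) (u : ℝ) : ℂ :=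
  SigmaGen R X l β fun a b _ => (((a * b).norm : ℝ)) ≤ u

/-- `Σ_{2″,β}(X,ℓ,u)`: restriction `N(a) ≤ u`, `N(b) ≤ u`, `N(ab) > u`. -/
def Sigma2'' (R : ℝ → ℂ) (X : ℝ) (l : ℤ) (β : ZI) (u : ℝ) : ℂ :=
  SigmaGen R X l β fun a b _ =>
    ((a.norm : ℝ)) ≤ u ∧ ((b.norm : ℝ)) ≤ u ∧ u < (((a * b).norm : ℝ))

/-- `Σ_{3,β}(X,ℓ,u)`: restriction `N(b) ≤ u`, `N(a) > u`, `N(bc) > u`. -/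
def Sigma3 (R : ℝ → ℂ) (X : ℝ) (l : ℤ) (β : ZI) (u : ℝ) : ℂ :=
  SigmaGen R X l β fun a b c =>
    ((b.norm : ℝ)) ≤ u ∧ u < ((a.norm : ℝ)) ∧ u < (((b * c).norm : ℝ))

/-- `Σ_{4,β}(X,ℓ,u)`: restriction `N(a) ≤ u`, `N(bc) ≤ u`. -/
def Sigma4 (R : ℝ → ℂ) (X : ℝ) (l : ℤ) (β : ZI) (u : ℝ) : ℂ :=
  SigmaGen R X l β fun a b c => ((a.norm : ℝ)) ≤ u ∧ (((b * c).norm : ℝ)) ≤ u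

/-- `H_β(X,ℓ) = Σ_{c ≡ β (4)} g̃₄(c) (c̄/|c|)^ℓ Λ(c) R(N(c)/X)`. -/
def Hsum (R : ℝ → ℂ) (X : ℝ) (l : ℤ) (β : ZI) : ℂ :=
  ∑ᶠ c ∈ {c : ZI | (4 : ZI) ∣ (c - β)},
    g4t 1 c * gch c ^ l * (vMangoldt c : ℂ) * R ((c.norm : ℝ) / X)

/-- `F_β(x,ℓ;α) = Σ_{c ≡ β (4), α ∣ c} g̃₄(c) (c̄/|c|)^ℓ R(N(c)/x)`. -/
def Fsum (R : ℝ → ℂ) (x : ℝ) (l : ℤ) (β α : ZI) : ℂ :=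
  ∑ᶠ c ∈ {c : ZI | (4 : ZI) ∣ (c - β) ∧ α ∣ c},
    g4t 1 c * gch c ^ l * R ((c.norm : ℝ) / x)

end QuarticGauss

namespace QuarticGauss


/-! ### Auxiliary lemmas -/

section Aux

lemma lam_cubed : (lam ^ 3 : ZI) = ⟨-2, 2⟩ := by decide

lemma lam3_dvd_iff (z : ZI) : lam ^ 3 ∣ z ↔ 4 ∣ (z.im - z.re) ∧ 4 ∣ (z.re + z.im) := by
  rw [lam_cubed]
  constructor
  · rintro ⟨w, rfl⟩
    simp only [Zsqrtd.re_mul, Zsqrtd.im_mul]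
    exact ⟨⟨w.re, by ring⟩, ⟨-w.im, by ring⟩⟩
  · rintro ⟨⟨s, hs⟩, ⟨t, ht⟩⟩
    refine ⟨⟨s, -t⟩, ?_⟩
    have h1 : z.re = 2 * t - 2 * s := by omega
    have h2 : z.im = 2 * t + 2 * s := by omega
    ext <;> simp [Zsqrtd.re_mul, Zsqrtd.im_mul, h1, h2] <;> ring

lemma lam_dvd_iff (z : ZI) : lam ∣ z ↔ 2 ∣ (z.re + z.im) := by
  constructor
  · rintro ⟨w, rfl⟩
    refine ⟨w.re, ?_⟩
    simp [lam, Zsqrtd.re_mul, Zsqrtd.im_mul]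
    ring
  · rintro ⟨t, ht⟩
    refine ⟨⟨t, z.im - t⟩, ?_⟩
    ext <;> simp [lam, Zsqrtd.re_mul, Zsqrtd.im_mul] <;> omega

lemma lam3_dvd_four : (lam ^ 3 : ZI) ∣ 4 := by
  rw [lam3_dvd_iff]
  refine ⟨⟨-1, by decide⟩, ⟨1, by decide⟩⟩

lemma primary_ne_zero {b : ZI} (h : lam ^ 3 ∣ b - 1) : b ≠ 0 := by
  rintro rfl
  rw [lam3_dvd_iff] at h
  simp only [Zsqrtd.re_sub, Zsqrtd.im_sub, Zsqrtd.re_zero, Zsqrtd.im_zero, Zsqrtd.re_one,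
    Zsqrtd.im_one] at h
  omega

lemma primary_mul {a b : ZI} (ha : lam ^ 3 ∣ a - 1) (hb : lam ^ 3 ∣ b - 1) :
    lam ^ 3 ∣ a * b - 1 := by
  have h : a * b - 1 = (a - 1) * b + (b - 1) := by ring
  rw [h]
  exact dvd_add (ha.mul_right b) hb

lemma primary_of_mul_eq {p b x : ZI} (hp : lam ^ 3 ∣ p - 1) (hb : lam ^ 3 ∣ b - 1)
    (h : p * x = b) : lam ^ 3 ∣ x - 1 := by
  have h2 : x - 1 = (b - 1) - x * (p - 1) := by rw [← h]; ring
  rw [h2]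
  exact dvd_sub hb (hp.mul_left x)

lemma isUnit_primary_eq_one {z : ZI} (hz : IsUnit z) (h : lam ^ 3 ∣ z - 1) : z = 1 := by
  have hn : z.norm = 1 := by
    have := Zsqrtd.norm_eq_one_iff.mpr hz
    have h0 : (0:ℤ) ≤ z.norm := Zsqrtd.norm_nonneg (by norm_num) z
    omega
  have hn' : z.re * z.re + z.im * z.im = 1 := by
    have h2 : z.re * z.re - (-1) * z.im * z.im = 1 := hn
    linarith
  rw [lam3_dvd_iff] at h
  simp only [Zsqrtd.re_sub, Zsqrtd.im_sub, Zsqrtd.re_one, Zsqrtd.im_one] at h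
  have hre : -1 ≤ z.re ∧ z.re ≤ 1 := by constructor <;> nlinarith
  have him : -1 ≤ z.im ∧ z.im ≤ 1 := by constructor <;> nlinarith
  have hz1 : z.re = 1 ∧ z.im = 0 := by
    rcases hre with ⟨a1, a2⟩; rcases him with ⟨b1, b2⟩
    interval_cases h1 : z.re <;> interval_cases h2 : z.im <;> omega
  ext <;> simp [hz1.1, hz1.2]

lemma primary_not_lam_dvd {b : ZI} (h : lam ^ 3 ∣ b - 1) : ¬ lam ∣ b := by
  rw [lam3_dvd_iff] at h
  rw [lam_dvd_iff]
  simp only [Zsqrtd.re_sub, Zsqrtd.im_sub, Zsqrtd.re_one, Zsqrtd.im_one] at h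
  omega

lemma exists_primary_unit (q : ZI) (h : ¬ lam ∣ q) :
    ∃ u : ZI, IsUnit u ∧ lam ^ 3 ∣ u * q - 1 := by
  rw [lam_dvd_iff] at h
  set x := q.re with hx
  set y := q.im with hy
  have key : (4 ∣ y - x + 1 ∧ 4 ∣ x + y - 1) ∨ (4 ∣ x - y + 1 ∧ 4 ∣ -x - y - 1) ∨
      (4 ∣ x + y + 1 ∧ 4 ∣ x - y - 1) ∨ (4 ∣ -x - y + 1 ∧ 4 ∣ y - x - 1) := by omega
  rcases key with ⟨h1, h2⟩ | ⟨h1, h2⟩ | ⟨h1, h2⟩ | ⟨h1, h2⟩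
  · refine ⟨1, isUnit_one, ?_⟩
    rw [lam3_dvd_iff]
    constructor <;> (simp [Zsqrtd.re_mul, Zsqrtd.im_mul]; omega)
  · exact ⟨-1, isUnit_one.neg, by rw [lam3_dvd_iff]; constructor <;>
      (simp [Zsqrtd.re_mul, Zsqrtd.im_mul]; omega)⟩
  · refine ⟨⟨0, 1⟩, IsUnit.of_mul_eq_one (M := ZI) (a := ⟨0, 1⟩) ⟨0, -1⟩ (by decide), ?_⟩
    rw [lam3_dvd_iff]
    constructor <;> (simp [Zsqrtd.re_mul, Zsqrtd.im_mul]; omega)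
  · refine ⟨⟨0, -1⟩, IsUnit.of_mul_eq_one (M := ZI) (a := ⟨0, -1⟩) ⟨0, 1⟩ (by decide), ?_⟩
    rw [lam3_dvd_iff]
    constructor <;> (simp [Zsqrtd.re_mul, Zsqrtd.im_mul]; omega)

lemma exists_primary_prime_dvd {m : ZI} (hm0 : m ≠ 0) (hmu : ¬ IsUnit m) (hml : ¬ lam ∣ m) :
    ∃ p : ZI, Prime p ∧ p ∣ m ∧ lam ^ 3 ∣ p - 1 := by
  obtain ⟨q, hqi, hqm⟩ := WfDvdMonoid.exists_irreducible_factor hmu hm0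
  have hq : Prime q := (UniqueFactorizationMonoid.irreducible_iff_prime).mp hqi
  have hql : ¬ lam ∣ q := fun h => hml (h.trans hqm)
  obtain ⟨u, hu, hu3⟩ := exists_primary_unit q hql
  have hassoc : Associated (u * q) q := associated_unit_mul_left q u hu
  exact ⟨u * q, hassoc.symm.prime hq, hassoc.dvd.trans hqm, hu3⟩

/-- A canonical primary prime divisor. -/
def pdiv (m : ZI) : ZI :=
  if h : ∃ p : ZI, Prime p ∧ p ∣ m ∧ lam ^ 3 ∣ p - 1 then h.choose else 1

lemma pdiv_spec {m : ZI} (hm0 : m ≠ 0) (hmu : ¬ IsUnit m) (hml : ¬ lam ∣ m) :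
    Prime (pdiv m) ∧ pdiv m ∣ m ∧ lam ^ 3 ∣ pdiv m - 1 := by
  have h := exists_primary_prime_dvd hm0 hmu hml
  rw [pdiv, dif_pos h]
  exact h.choose_spec

lemma mu_one : mu 1 = 1 := by
  rw [mu, if_pos squarefree_one, UniqueFactorizationMonoid.factors_one]
  rfl

lemma card_factors_prime_mul {p b : ZI} (hp : Prime p) (hb : b ≠ 0) :
    Multiset.card (factors (p * b)) = Multiset.card (factors b) + 1 := by
  have hpb : p * b ≠ 0 := mul_ne_zero hp.ne_zero hb
  have h1 : Associated (factors (p * b)).prod (p * b) :=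
    UniqueFactorizationMonoid.factors_prod hpb
  have h2 : Associated (p ::ₘ factors b).prod (p * b) := by
    rw [Multiset.prod_cons]
    exact Associated.mul_left p (UniqueFactorizationMonoid.factors_prod hb)
  have hrel : Multiset.Rel Associated (factors (p * b)) (p ::ₘ factors b) :=
    UniqueFactorizationMonoid.factors_unique
      (fun x hx => (UniqueFactorizationMonoid.prime_of_factor x hx).irreducible)
      (fun x hx => by
        rcases Multiset.mem_cons.mp hx with rfl | hx
        · exact hp.irreducible
        · exact (UniqueFactorizationMonoid.prime_of_factor x hx).irreducible)
      (h1.trans h2.symm)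
  have := Multiset.card_eq_card_of_rel hrel
  simpa [Multiset.card_cons, add_comm] using this

set_option synthInstance.maxHeartbeats 1000000 in
lemma mu_prime_mul {p b : ZI} (hp : Prime p) (hpb : ¬ p ∣ b) (hb : Squarefree b) :
    mu (p * b) = - mu b := by
  have hb0 : b ≠ 0 := hb.ne_zero
  have hsq : Squarefree (p * b) :=
    squarefree_mul_iff.mpr ⟨hp.irreducible.isRelPrime_iff_not_dvd.mpr hpb, hp.squarefree, hb⟩
  rw [mu, mu, if_pos hsq, if_pos hb, card_factors_prime_mul hp hb0, pow_succ]
  ring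

lemma finite_norm_le (B : ℝ) : {z : ZI | (z.norm : ℝ) ≤ B}.Finite := by
  set M : ℤ := ⌈B⌉ with hM
  have hsub : {z : ZI | (z.norm : ℝ) ≤ B} ⊆
      (fun z : ZI => (z.re, z.im)) ⁻¹'
        ↑((Finset.Icc (-(M+1)) (M+1)) ×ˢ (Finset.Icc (-(M+1)) (M+1))) := by
    intro z hz
    simp only [Set.mem_setOf_eq] at hz
    have h1 : z.norm ≤ M := by
      have := (Int.le_ceil B)
      exact_mod_cast hz.trans this
    have h2 : z.re * z.re + z.im * z.im ≤ M := by
      have hh : z.norm = z.re * z.re - (-1) * z.im * z.im := rfl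
      linarith [hh ▸ h1]
    simp only [Set.mem_preimage, Finset.coe_product, Set.mem_prod, Finset.mem_coe,
      Finset.mem_Icc]
    constructor <;> constructor <;> nlinarith [mul_self_nonneg z.re, mul_self_nonneg z.im,
      mul_self_nonneg (z.re - 1), mul_self_nonneg (z.re + 1), mul_self_nonneg (z.im - 1),
      mul_self_nonneg (z.im + 1)]
  refine Set.Finite.subset (Set.Finite.preimage ?_ (Finset.finite_toSet _)) hsub
  intro a _ b _ h
  exact Zsqrtd.ext_iff.mpr ⟨congrArg Prod.fst h, congrArg Prod.snd h⟩

lemma one_le_norm {z : ZI} (hz : z ≠ 0) : 1 ≤ z.norm := by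
  have h0 : 0 ≤ z.norm := Zsqrtd.norm_nonneg (by norm_num) z
  rcases lt_or_eq_of_le h0 with h | h
  · omega
  · exfalso
    exact hz ((Zsqrtd.norm_eq_zero (by intro n; nlinarith [mul_self_nonneg n]) z).mp h.symm)

/-- The involution moving the canonical primary prime divisor of `b * c` between `b` and `c`. -/
def swapOp (t : ZI × ZI × ZI) : ZI × ZI × ZI :=
  if pdiv (t.2.1 * t.2.2) ∣ t.2.1 then
    (t.1, t.2.1 / pdiv (t.2.1 * t.2.2), t.2.2 * pdiv (t.2.1 * t.2.2))
  else
    (t.1, t.2.1 * pdiv (t.2.1 * t.2.2), t.2.2 / pdiv (t.2.1 * t.2.2))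

lemma swapOp_def (t : ZI × ZI × ZI) : swapOp t =
    if pdiv (t.2.1 * t.2.2) ∣ t.2.1 then
      (t.1, t.2.1 / pdiv (t.2.1 * t.2.2), t.2.2 * pdiv (t.2.1 * t.2.2))
    else
      (t.1, t.2.1 * pdiv (t.2.1 * t.2.2), t.2.2 / pdiv (t.2.1 * t.2.2)) := rfl

set_option synthInstance.maxHeartbeats 1000000 in
lemma swap_key {t : ZI × ZI × ZI} (hb1 : lam ^ 3 ∣ t.2.1 - 1) (hc1 : lam ^ 3 ∣ t.2.2 - 1)
    (hbsq : Squarefree t.2.1) (hnd : ¬ (t.2.1 = 1 ∧ t.2.2 = 1)) :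
    (lam ^ 3 ∣ (swapOp t).2.1 - 1) ∧ (lam ^ 3 ∣ (swapOp t).2.2 - 1) ∧
    (swapOp t).1 = t.1 ∧ (swapOp t).2.1 * (swapOp t).2.2 = t.2.1 * t.2.2 ∧
    mu (swapOp t).2.1 = - mu t.2.1 ∧
    ¬ ((swapOp t).2.1 = 1 ∧ (swapOp t).2.2 = 1) ∧
    swapOp t ≠ t ∧ swapOp (swapOp t) = t := by
  obtain ⟨a, b, c⟩ := t
  simp only [] at hb1 hc1 hbsq hnd
  have hm1 : lam ^ 3 ∣ b * c - 1 := primary_mul hb1 hc1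
  have hm0 : b * c ≠ 0 := primary_ne_zero hm1
  have hb0 : b ≠ 0 := primary_ne_zero hb1
  have hc0 : c ≠ 0 := primary_ne_zero hc1
  have hml : ¬ lam ∣ b * c := primary_not_lam_dvd hm1
  have hmu1 : ¬ IsUnit (b * c) := by
    intro h
    have hm : b * c = 1 := isUnit_primary_eq_one h hm1
    have hbu : IsUnit b := IsUnit.of_mul_eq_one (a := b) c hm
    have hb' : b = 1 := isUnit_primary_eq_one hbu hb1
    refine hnd ⟨hb', ?_⟩
    rw [hb', one_mul] at hm
    exact hm
  obtain ⟨hp, hpm, hp1⟩ := pdiv_spec hm0 hmu1 hml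
  set p := pdiv (b * c) with hpdef
  have hpne : p ≠ 0 := hp.ne_zero
  have hpnu : ¬ IsUnit p := hp.not_unit
  by_cases hpb : p ∣ b
  · have hred : swapOp (a, b, c) = (a, b / p, c * p) := by
      simp only [swapOp_def, ← hpdef]
      rw [if_pos hpb]
    have hpb' : p * (b / p) = b := EuclideanDomain.mul_div_cancel' hpne hpb
    have hb'1 : lam ^ 3 ∣ b / p - 1 := primary_of_mul_eq hp1 hb1 hpb'
    have hcp1 : lam ^ 3 ∣ c * p - 1 := primary_mul hc1 hp1
    have hprod : b / p * (c * p) = b * c := by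
      have h' : b / p * (c * p) = p * (b / p) * c := by ring
      rw [h', hpb']
    have hb'dvd : b / p ∣ b := ⟨p, by rw [mul_comm]; exact hpb'.symm⟩
    have hb'sq : Squarefree (b / p) := hbsq.squarefree_of_dvd hb'dvd
    have hpb'' : ¬ p ∣ b / p := by
      intro h
      obtain ⟨k, hk⟩ := h
      exact hpnu (hbsq p ⟨k, by rw [mul_assoc, ← hk]; exact hpb'.symm⟩)
    have hmub : mu (b / p) = - mu b := by
      have h := mu_prime_mul hp hpb'' hb'sq
      rw [hpb'] at h
      omega
    have hne1 : ¬ (b / p = 1 ∧ c * p = 1) := by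
      rintro ⟨-, h2⟩
      exact hpnu (IsUnit.of_mul_eq_one (a := p) c (by rw [mul_comm]; exact h2))
    have hbne : b / p ≠ b := by
      intro h
      rw [h] at hpb'
      have h0 : (p - 1) * b = 0 := by linear_combination hpb'
      rcases mul_eq_zero.mp h0 with h1 | h1
      · rw [sub_eq_zero] at h1
        exact hpnu (h1 ▸ isUnit_one)
      · exact hb0 h1
    have hswap2 : swapOp (a, b / p, c * p) = (a, b, c) := by
      simp only [swapOp_def]
      rw [hprod, ← hpdef, if_neg hpb'']
      refine Prod.ext rfl (Prod.ext ?_ ?_)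
      · show b / p * p = b
        rw [mul_comm]; exact hpb'
      · show c * p / p = c
        exact mul_div_cancel_right₀ c hpne
    rw [hred]
    refine ⟨hb'1, hcp1, rfl, hprod, hmub, hne1, ?_, hswap2⟩
    intro h
    exact hbne (by simpa using congrArg (fun x => x.2.1) h)
  · have hpc : p ∣ c := (hp.dvd_mul.mp hpm).resolve_left hpb
    have hred : swapOp (a, b, c) = (a, b * p, c / p) := by
      simp only [swapOp_def, ← hpdef]
      rw [if_neg hpb]
    have hpc' : p * (c / p) = c := EuclideanDomain.mul_div_cancel' hpne hpc
    have hc'1 : lam ^ 3 ∣ c / p - 1 := primary_of_mul_eq hp1 hc1 hpc'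
    have hbp1 : lam ^ 3 ∣ b * p - 1 := primary_mul hb1 hp1
    have hprod : b * p * (c / p) = b * c := by
      have h' : b * p * (c / p) = b * (p * (c / p)) := by ring
      rw [h', hpc']
    have hbpsq : Squarefree (b * p) := by
      rw [mul_comm]
      exact squarefree_mul_iff.mpr
        ⟨hp.irreducible.isRelPrime_iff_not_dvd.mpr hpb, hp.squarefree, hbsq⟩
    have hmub : mu (b * p) = - mu b := by
      rw [mul_comm]
      exact mu_prime_mul hp hpb hbsq
    have hne1 : ¬ (b * p = 1 ∧ c / p = 1) := by
      rintro ⟨h2, -⟩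
      exact hpnu (IsUnit.of_mul_eq_one (a := p) b (by rw [mul_comm]; exact h2))
    have hpbp : p ∣ b * p := Dvd.intro_left b rfl
    have hswap2 : swapOp (a, b * p, c / p) = (a, b, c) := by
      simp only [swapOp_def]
      rw [hprod, ← hpdef, if_pos hpbp]
      refine Prod.ext rfl (Prod.ext ?_ ?_)
      · show b * p / p = b
        exact mul_div_cancel_right₀ b hpne
      · show c / p * p = c
        rw [mul_comm]; exact hpc'
    rw [hred]
    refine ⟨hbp1, hc'1, rfl, hprod, hmub, hne1, ?_, hswap2⟩
    intro h
    have hbp : b * p = b := by simpa using congrArg (fun x => x.2.1) h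
    have h0 : (p - 1) * b = 0 := by linear_combination hbp
    rcases mul_eq_zero.mp h0 with h1 | h1
    · rw [sub_eq_zero] at h1
      exact hpnu (h1 ▸ isUnit_one)
    · exact hb0 h1

end Aux

theorem statement6 (R : ℝ → ℂ) (hR : ContDiff ℝ (⊤ : ℕ∞) R) (hRsupp : tsupport R ⊆ Set.Icc 1 2)
    (X : ℝ) (hX : 1 ≤ X) (u : ℝ) (hu : 1 ≤ u) (hu' : u < Real.sqrt X) (l : ℤ) (β : ZI)
    (hβ : β = 1 ∨ β = 1 + lam ^ 3) :
    Sigma0 R X l β u = Hsum R X l β := by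
  classical
  have hX0 : (0:ℝ) < X := lt_of_lt_of_le one_pos hX
  have hβ1 : lam ^ 3 ∣ β - 1 := by
    rcases hβ with rfl | rfl
    · simp
    · simp
  set T : Set (ZI × ZI × ZI) := {t : ZI × ZI × ZI |
      lam ^ 3 ∣ (t.1 - 1) ∧ lam ^ 3 ∣ (t.2.1 - 1) ∧ lam ^ 3 ∣ (t.2.2 - 1) ∧
      (4 : ZI) ∣ (t.1 * t.2.1 * t.2.2 - β) ∧ (((t.2.1 * t.2.2).norm : ℝ) ≤ u)} with hTdef
  set D : Set (ZI × ZI × ZI) := {t : ZI × ZI × ZI | t.2.1 = 1 ∧ t.2.2 = 1} with hDdef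
  set F : ZI × ZI × ZI → ℂ := fun t =>
    (vMangoldt t.1 : ℂ) * (mu t.2.1 : ℂ) * g4t 1 (t.1 * t.2.1 * t.2.2) *
      gch (t.1 * t.2.1 * t.2.2) ^ l * R (((t.1 * t.2.1 * t.2.2).norm : ℝ) / X) with hFdef
  have hS0 : Sigma0 R X l β u = ∑ᶠ t ∈ T, F t := rfl
  -- finiteness of the support
  have hTfin : (T ∩ Function.support F).Finite := by
    refine Set.Finite.subset
      ((finite_norm_le (2*X)).prod ((finite_norm_le (2*X)).prod (finite_norm_le (2*X)))) ?_
    rintro ⟨a, b, c⟩ ⟨ht, hs⟩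
    obtain ⟨ha1, hb1, hc1, -, -⟩ := ht
    have hRne : R (((a * b * c).norm : ℝ) / X) ≠ 0 := by
      intro h0
      apply hs
      show F (a, b, c) = 0
      simp only [hFdef]
      rw [h0, mul_zero]
    have hmem := hRsupp (subset_tsupport R hRne)
    rw [Set.mem_Icc] at hmem
    have hNle : ((a * b * c).norm : ℝ) ≤ 2 * X := by
      have h2 := hmem.2
      rw [div_le_iff₀ hX0] at h2
      linarith
    have hna : (1:ℝ) ≤ (a.norm : ℝ) := by exact_mod_cast one_le_norm (primary_ne_zero ha1)
    have hnb : (1:ℝ) ≤ (b.norm : ℝ) := by exact_mod_cast one_le_norm (primary_ne_zero hb1)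
    have hnc : (1:ℝ) ≤ (c.norm : ℝ) := by exact_mod_cast one_le_norm (primary_ne_zero hc1)
    have hmul : ((a*b*c).norm : ℝ) = (a.norm : ℝ) * (b.norm : ℝ) * (c.norm : ℝ) := by
      rw [Zsqrtd.norm_mul, Zsqrtd.norm_mul]
      push_cast
      ring
    rw [hmul] at hNle
    have hbc : (1:ℝ) ≤ (b.norm : ℝ) * (c.norm : ℝ) := by nlinarith
    have hac : (1:ℝ) ≤ (a.norm : ℝ) * (c.norm : ℝ) := by nlinarith
    have hab : (1:ℝ) ≤ (a.norm : ℝ) * (b.norm : ℝ) := by nlinarith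
    refine ⟨?_, ?_, ?_⟩ <;> simp only [Set.mem_setOf_eq]
    · nlinarith [mul_nonneg (sub_nonneg.mpr hbc) (by linarith : (0:ℝ) ≤ (a.norm : ℝ))]
    · nlinarith [mul_nonneg (sub_nonneg.mpr hac) (by linarith : (0:ℝ) ≤ (b.norm : ℝ))]
    · nlinarith [mul_nonneg (sub_nonneg.mpr hab) (by linarith : (0:ℝ) ≤ (c.norm : ℝ))]
  -- the diagonal part equals Hsum
  have hH : Hsum R X l β = ∑ᶠ c ∈ {c : ZI | (4 : ZI) ∣ (c - β)},
      (g4t 1 c * gch c ^ l * (vMangoldt c : ℂ) * R ((c.norm : ℝ) / X)) := rfl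
  have hA : ∑ᶠ t ∈ T ∩ D, F t = Hsum R X l β := by
    rw [hH]
    refine (finsum_mem_eq_of_bijOn (fun c : ZI => ((c, 1, 1) : ZI × ZI × ZI))
      ⟨?_, ?_, ?_⟩ ?_).symm
    · -- MapsTo
      intro c hc
      simp only [Set.mem_setOf_eq] at hc
      refine ⟨?_, ⟨rfl, rfl⟩⟩
      rw [hTdef]
      simp only [Set.mem_setOf_eq]
      refine ⟨?_, by simp, by simp, by simpa using hc, ?_⟩
      · have h' : c - 1 = (c - β) + (β - 1) := by ring
        rw [h']
        exact dvd_add (dvd_trans lam3_dvd_four hc) hβ1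
      · show (((1 * 1 : ZI).norm : ℝ)) ≤ u
        simpa using hu
    · -- InjOn
      intro c1 _ c2 _ h
      simpa using congrArg Prod.fst h
    · -- SurjOn
      rintro t ⟨htT, htb, htc⟩
      rw [hTdef] at htT
      simp only [Set.mem_setOf_eq] at htT
      refine ⟨t.1, ?_, ?_⟩
      · simp only [Set.mem_setOf_eq]
        have h4 := htT.2.2.2.1
        rwa [htb, htc, mul_one, mul_one] at h4
      · show ((t.1, 1, 1) : ZI × ZI × ZI) = t
        exact Prod.ext_iff.mpr ⟨rfl, Prod.ext_iff.mpr ⟨htb.symm, htc.symm⟩⟩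
    · -- values agree
      intro c _
      show g4t 1 c * gch c ^ l * (vMangoldt c : ℂ) * R ((c.norm : ℝ) / X) = F (c, 1, 1)
      simp only [hFdef, mul_one, mu_one, Int.cast_one]
      ring
  -- the off-diagonal part vanishes
  have hfin2 : ((T \ D) ∩ Function.support F).Finite := by
    refine hTfin.subset ?_
    rintro t ⟨⟨h1, -⟩, h2⟩
    exact ⟨h1, h2⟩
  have hB : ∑ᶠ t ∈ T \ D, F t = 0 := by
    rw [finsum_mem_eq_sum F hfin2]
    refine Finset.sum_involution (fun t _ => swapOp t) ?_ ?_ ?_ ?_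
    all_goals
      intro t ht
      rw [Set.Finite.mem_toFinset] at ht
      obtain ⟨⟨htT, htD⟩, htF⟩ := ht
      rw [hTdef] at htT
      simp only [Set.mem_setOf_eq] at htT
      obtain ⟨ha1, hb1, hc1, h4, hQ⟩ := htT
      have hDne : ¬ (t.2.1 = 1 ∧ t.2.2 = 1) := by
        intro h
        exact htD (by rw [hDdef]; exact h)
      have hbsq : Squarefree t.2.1 := by
        by_contra hns
        apply htF
        show F t = 0
        simp only [hFdef]
        rw [mu, if_neg hns]
        push_cast
        ring
      obtain ⟨k1, k2, k3, k4, k5, k6, k7, k8⟩ := swap_key hb1 hc1 hbsq hDne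
      have hprod3 : (swapOp t).1 * (swapOp t).2.1 * (swapOp t).2.2 =
          t.1 * t.2.1 * t.2.2 := by
        rw [mul_assoc, k4, k3, ← mul_assoc]
      have hFneg : F (swapOp t) = - F t := by
        simp only [hFdef]
        rw [hprod3, k3, k5]
        push_cast
        ring
    · -- sum of values is zero
      show F t + F (swapOp t) = 0
      rw [hFneg]
      ring
    · -- no fixed points
      intro _
      show swapOp t ≠ t
      exact k7
    · -- closure
      rw [Set.Finite.mem_toFinset]
      show swapOp t ∈ (T \ D) ∩ Function.support F
      refine ⟨⟨?_, ?_⟩, ?_⟩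
      · rw [hTdef]
        simp only [Set.mem_setOf_eq]
        exact ⟨k3 ▸ ha1, k1, k2, hprod3 ▸ h4, k4 ▸ hQ⟩
      · intro hD'
        rw [hDdef] at hD'
        exact k6 hD'
      · show F (swapOp t) ≠ 0
        rw [hFneg]
        simpa using htF
    · -- involution
      show swapOp (swapOp t) = t
      exact k8
  rw [hS0, ← finsum_mem_inter_add_sdiff' (f := F) (s := T) D hTfin, hA, hB, add_zero]

end QuarticGauss
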